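/- arXiv:0803.1266 — 4 statements merged into one kernel-verified Lean document; each statement's English description precedes it below -/
import Mathlib

section
/- Let ρ be a probability measure on [0,∞) with ρ({0}) < 1 (equivalently ρ((0,∞)) > 0). Then the sequence of positive measures ν_n := ρ + ρ*ρ + ... + ρ^{*n} (sums of convolution powers) converges in the vague topology to a translation bounded positive measure ν on ℝ; in particular, there exist constants C₁, C₂ such that ν([b, b+x)) ≤ 1 + C₁ + C₂·x for all b ≥ 0 and x > 0. -/
/-!
The limit is `ν = ∑_{k ≥ 1} ρ^{*k}`. Its mass on unit intervals is bounded uniformly by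
`∑_{n ≥ 0} ρ^{*n}[0,1)`: the truncations `U_N = δ₀ + ρ + ⋯ + ρ^{*(N-1)}` satisfy
`U_{N+1} = δ₀ + U_N ∗ ρ`, so for `s > 0` the mass `U_{N+1}[s, s+1)` is a `ρ`-average of masses of
unit intervals under `U_N`, while intervals left of the origin carry at most `U_N[0,1)` since
everything lives on `[0, ∞)`; induction on `N` gives `U_N[s, s+1) ≤ U_N[0,1)`. This bound is
finite because `ρ^{*n}[0,1) ≤ e φⁿ` with `φ = ∫ e^{-z} dρ(z) < 1`, as `ρ ≠ δ₀`.
A uniform bound on unit intervals gives translation boundedness and linear growth, and makes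
compactly supported continuous `f` integrable for `ν`, so `∫ f dν_n → ∫ f dν` is the convergence
of the series `∑ₖ ∫ f dρ^{*(k+1)}`.
-/

open MeasureTheory Filter Topology
open scoped NNReal ENNReal

/-- Convolution of two measures on `ℝ`. -/
noncomputable def mconv (μ ν : Measure ℝ) : Measure ℝ :=
  (μ.prod ν).map (fun p : ℝ × ℝ => p.1 + p.2)

/-- `convPow ρ n` is the `n`-fold convolution power `ρ^{*n}` (with `ρ^{*0} = δ₀`). -/
noncomputable def convPow (ρ : Measure ℝ) : ℕ → Measure ℝ
  | 0 => Measure.dirac 0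
  | n + 1 => mconv (convPow ρ n) ρ

/-- The partial sums `ν_n = ρ + ρ*ρ + ⋯ + ρ^{*n}`. -/
noncomputable def nuPartial (ρ : Measure ℝ) (n : ℕ) : Measure ℝ :=
  ∑ k ∈ Finset.range n, convPow ρ (k + 1)

open Set

section Convolution

variable {μ ν : Measure ℝ}

lemma conv_apply_eq_lintegral [SFinite μ] [SFinite ν] {A : Set ℝ} (hA : MeasurableSet A) :
    (μ ∗ ν) A = ∫⁻ y, μ ((· + y) ⁻¹' A) ∂ν := by
  rw [Measure.conv, Measure.map_apply measurable_add hA,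
    Measure.prod_apply_symm (measurable_add hA)]
  rfl

lemma conv_Iio_zero_eq_zero [SFinite μ] [SFinite ν] (hμ : μ (Iio 0) = 0) (hν : ν (Iio 0) = 0) :
    (μ ∗ ν) (Iio 0) = 0 := by
  rw [conv_apply_eq_lintegral measurableSet_Iio, ← lintegral_zero (μ := ν)]
  refine lintegral_congr_ae ?_
  filter_upwards [measure_eq_zero_iff_ae_notMem.mp hν] with y hy
  refine measure_mono_null (fun x hx => ?_) hμ
  simp only [mem_Iio, mem_preimage] at hx hy ⊢
  linarith

lemma conv_le_of_forall_preimage_add_le [SFinite μ] [SFinite ν] {A : Set ℝ} (hA : MeasurableSet A)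
    {c : ℝ≥0∞} (h : ∀ y, μ ((· + y) ⁻¹' A) ≤ c) : (μ ∗ ν) A ≤ c * ν univ := by
  rw [conv_apply_eq_lintegral hA, ← lintegral_const]
  exact lintegral_mono h

lemma lintegral_exp_neg_conv [SFinite ν] :
    ∫⁻ z, ENNReal.ofReal (Real.exp (-z)) ∂(μ ∗ ν) =
      (∫⁻ x, ENNReal.ofReal (Real.exp (-x)) ∂μ) * ∫⁻ y, ENNReal.ofReal (Real.exp (-y)) ∂ν := by
  have hexp : ∀ x y : ℝ, ENNReal.ofReal (Real.exp (-(x + y))) =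
      ENNReal.ofReal (Real.exp (-x)) * ENNReal.ofReal (Real.exp (-y)) := fun x y => by
    rw [← ENNReal.ofReal_mul (Real.exp_nonneg _), ← Real.exp_add, neg_add]
  have hm : Measurable fun x : ℝ => ENNReal.ofReal (Real.exp (-x)) := by fun_prop
  simp_rw [Measure.lintegral_conv hm, hexp, lintegral_const_mul _ hm, lintegral_mul_const _ hm]

end Convolution

lemma measure_Ico_le_Ico_zero_one {μ : Measure ℝ} (hμ : μ (Iio 0) = 0) {s : ℝ} (hs : s ≤ 0) :
    μ (Ico s (s + 1)) ≤ μ (Ico 0 1) := by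
  have hsub : Ico s (s + 1) ⊆ Iio 0 ∪ Ico 0 1 := fun x hx => by
    rcases lt_or_ge x 0 with h | h
    · exact Or.inl h
    · exact Or.inr ⟨h, by linarith [hx.2]⟩
  calc μ (Ico s (s + 1)) ≤ μ (Iio 0) + μ (Ico 0 1) :=
        (measure_mono hsub).trans (measure_union_le _ _)
    _ = μ (Ico 0 1) := by rw [hμ, zero_add]

lemma Bornology.IsBounded.exists_subset_Ico_nat {S : Set ℝ} (hS : Bornology.IsBounded S) :
    ∃ (a : ℝ) (m : ℕ), S ⊆ Ico a (a + m) := by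
  obtain ⟨a, b, hab⟩ := bddBelow_bddAbove_iff_subset_Icc.mp ⟨hS.bddBelow, hS.bddAbove⟩
  refine ⟨a, ⌊b - a⌋₊ + 1, hab.trans fun x hx => ⟨hx.1, ?_⟩⟩
  have := Nat.lt_floor_add_one (b - a)
  push_cast
  linarith [hx.2]

section UnitIntervals

variable {μ : Measure ℝ} {c : ℝ≥0∞} (h : ∀ t, μ (Ico t (t + 1)) ≤ c)
include h

lemma measure_Ico_nat_le (s : ℝ) (m : ℕ) : μ (Ico s (s + m)) ≤ m * c := by
  induction m with
  | zero => simp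
  | succ m ih =>
    have hsub : Ico s (s + (m + 1 : ℕ)) ⊆ Ico s (s + m) ∪ Ico (s + m) (s + m + 1) := by
      push_cast
      rw [← add_assoc, Ico_union_Ico_eq_Ico] <;> linarith [m.cast_nonneg (α := ℝ)]
    calc μ (Ico s (s + (m + 1 : ℕ))) ≤ μ (Ico s (s + m)) + μ (Ico (s + m) (s + m + 1)) :=
          (measure_mono hsub).trans (measure_union_le _ _)
      _ ≤ m * c + c := add_le_add ih (h _)
      _ = (m + 1 : ℕ) * c := by push_cast; ring

lemma measure_Ico_le_add_mul (s : ℝ) {x : ℝ} (hx : 0 ≤ x) :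
    μ (Ico s (s + x)) ≤ c + c * ENNReal.ofReal x := by
  have hsub : Ico s (s + x) ⊆ Ico s (s + (⌊x⌋₊ + 1 : ℕ)) := by
    apply Ico_subset_Ico_right
    push_cast
    linarith [Nat.lt_floor_add_one x]
  have hfloor : (⌊x⌋₊ : ℝ≥0∞) ≤ ENNReal.ofReal x := by
    rw [← ENNReal.ofReal_natCast]
    exact ENNReal.ofReal_le_ofReal (Nat.floor_le hx)
  calc μ (Ico s (s + x)) ≤ (⌊x⌋₊ + 1 : ℕ) * c :=
        (measure_mono hsub).trans (measure_Ico_nat_le h _ _)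
    _ = c + ⌊x⌋₊ * c := by push_cast; ring
    _ ≤ c + c * ENNReal.ofReal x := by rw [mul_comm]; gcongr

lemma exists_forall_measure_image_add_le {K : Set ℝ} (hK : Bornology.IsBounded K) :
    ∃ m : ℕ, ∀ t, μ ((t + ·) '' K) ≤ m * c := by
  obtain ⟨a, m, hKa⟩ := hK.exists_subset_Ico_nat
  refine ⟨m, fun t => (measure_mono ?_).trans (measure_Ico_nat_le h (t + a) m)⟩
  rintro _ ⟨x, hx, rfl⟩
  exact ⟨by linarith [(hKa hx).1], by linarith [(hKa hx).2]⟩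

lemma isFiniteMeasureOnCompacts_of_forall_Ico_le (hc : c ≠ ∞) : IsFiniteMeasureOnCompacts μ := by
  refine ⟨fun K hK => ?_⟩
  obtain ⟨m, hm⟩ := exists_forall_measure_image_add_le h hK.isBounded
  simpa using (hm 0).trans_lt (ENNReal.mul_lt_top (ENNReal.natCast_lt_top m) hc.lt_top)

end UnitIntervals

section ConvolutionPowers

lemma convPow_succ (ρ : Measure ℝ) (n : ℕ) : convPow ρ (n + 1) = convPow ρ n ∗ ρ := rfl

variable {ρ : Measure ℝ} [IsProbabilityMeasure ρ]

instance (n : ℕ) : IsProbabilityMeasure (convPow ρ n) := by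
  induction n with
  | zero => rw [convPow]; infer_instance
  | succ n ih => rw [convPow_succ]; infer_instance

lemma convPow_Iio_zero (hρ : ρ (Iio 0) = 0) (n : ℕ) : convPow ρ n (Iio 0) = 0 := by
  induction n with
  | zero => simp [convPow]
  | succ n ih => exact conv_Iio_zero_eq_zero ih hρ

lemma lintegral_exp_neg_convPow (n : ℕ) :
    ∫⁻ z, ENNReal.ofReal (Real.exp (-z)) ∂(convPow ρ n) =
      (∫⁻ z, ENNReal.ofReal (Real.exp (-z)) ∂ρ) ^ n := by
  induction n with
  | zero => simp [convPow]
  | succ n ih => rw [convPow_succ, lintegral_exp_neg_conv, ih, pow_succ]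

lemma lintegral_exp_neg_lt_one (hρ : ρ (Iio 0) = 0) (hzero : ρ {0} < 1) :
    ∫⁻ z, ENNReal.ofReal (Real.exp (-z)) ∂ρ < 1 := by
  have hnonneg : ∀ᵐ z ∂ρ, 0 ≤ z := by
    filter_upwards [measure_eq_zero_iff_ae_notMem.mp hρ] with z hz
    simpa using hz
  have hle : ∀ᵐ z ∂ρ, ENNReal.ofReal (Real.exp (-z)) ≤ 1 := by
    filter_upwards [hnonneg] with z hz
    exact ENNReal.ofReal_le_one.mpr (Real.exp_le_one_iff.mpr (by linarith))
  have hne : ∃ᵐ z ∂ρ, ENNReal.ofReal (Real.exp (-z)) ≠ 1 := by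
    intro h
    have hae : ∀ᵐ z ∂ρ, z ∈ ({0} : Set ℝ) := h.mono fun z hz => by
      have hexp : ENNReal.ofReal (Real.exp (-z)) = ENNReal.ofReal 1 := by simpa using hz
      rw [ENNReal.ofReal_eq_ofReal_iff (Real.exp_nonneg _) zero_le_one, Real.exp_eq_one_iff,
        neg_eq_zero] at hexp
      exact hexp
    exact hzero.ne ((prob_compl_eq_zero_iff (measurableSet_singleton 0)).mp (ae_iff.mp hae))
  calc ∫⁻ z, ENNReal.ofReal (Real.exp (-z)) ∂ρ < ∫⁻ _, 1 ∂ρ :=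
        lintegral_strict_mono_of_ae_le_of_frequently_ae_lt aemeasurable_const
          ((lintegral_mono_ae hle).trans_lt (by simp)).ne hle hne
    _ = 1 := by simp

lemma measure_Ico_zero_one_le_lintegral_exp_neg (μ : Measure ℝ) :
    μ (Ico 0 1) ≤ ENNReal.ofReal (Real.exp 1) * ∫⁻ z, ENNReal.ofReal (Real.exp (-z)) ∂μ := by
  rw [← lintegral_indicator_one measurableSet_Ico, ← lintegral_const_mul _ (by fun_prop)]
  refine lintegral_mono fun z => ?_
  by_cases hz : z ∈ Ico (0 : ℝ) 1
  · rw [indicator_of_mem hz, Pi.one_apply, ← ENNReal.ofReal_mul (Real.exp_nonneg _),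
      ← Real.exp_add, ← ENNReal.ofReal_one]
    exact ENNReal.ofReal_le_ofReal (Real.one_le_exp (by linarith [hz.2]))
  · simp [indicator_of_notMem hz]

lemma tsum_convPow_Ico_zero_one_ne_top (hρ : ρ (Iio 0) = 0) (hzero : ρ {0} < 1) :
    ∑' n, convPow ρ n (Ico 0 1) ≠ ∞ := by
  set φ := ∫⁻ z, ENNReal.ofReal (Real.exp (-z)) ∂ρ
  refine ne_top_of_le_ne_top (b := ∑' n, ENNReal.ofReal (Real.exp 1) * φ ^ n) ?_
    (ENNReal.tsum_le_tsum fun n => ?_)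
  · rw [ENNReal.tsum_mul_left, ENNReal.tsum_geometric]
    exact ENNReal.mul_ne_top ENNReal.ofReal_ne_top
      (ENNReal.inv_ne_top.mpr (tsub_pos_iff_lt.mpr (lintegral_exp_neg_lt_one hρ hzero)).ne')
  · rw [← lintegral_exp_neg_convPow]
    exact measure_Ico_zero_one_le_lintegral_exp_neg _

end ConvolutionPowers

lemma tendsto_integral_sum_range_measure {α E : Type*} [MeasurableSpace α] [NormedAddCommGroup E]
    [NormedSpace ℝ E] {μ : ℕ → Measure α} {f : α → E} (hf : Integrable f (Measure.sum μ)) :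
    Tendsto (fun n => ∫ x, f x ∂(∑ k ∈ Finset.range n, μ k)) atTop
      (𝓝 (∫ x, f x ∂(Measure.sum μ))) := by
  have hfk : ∀ k, Integrable f (μ k) := fun k => hf.mono_measure (Measure.le_sum μ k)
  simpa only [integral_finsetSum_measure fun k _ => hfk k] using
    (hasSum_integral_measure hf).tendsto_sum_nat

noncomputable def renewalPartial (ρ : Measure ℝ) (N : ℕ) : Measure ℝ :=
  ∑ k ∈ Finset.range N, convPow ρ k

noncomputable def nuLimit (ρ : Measure ℝ) : Measure ℝ :=
  Measure.sum fun k => convPow ρ (k + 1)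

lemma renewalPartial_apply {ρ : Measure ℝ} (N : ℕ) (A : Set ℝ) :
    renewalPartial ρ N A = ∑ k ∈ Finset.range N, convPow ρ k A :=
  Measure.finsetSum_apply _ _ _

lemma renewalPartial_succ_eq_add {ρ : Measure ℝ} (N : ℕ) :
    renewalPartial ρ (N + 1) = renewalPartial ρ N + convPow ρ N :=
  Finset.sum_range_succ _ _

section Renewal

variable {ρ : Measure ℝ} [IsProbabilityMeasure ρ]

instance (N : ℕ) : IsFiniteMeasure (renewalPartial ρ N) := by
  induction N with
  | zero => simp only [renewalPartial, Finset.range_zero, Finset.sum_empty]; infer_instance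
  | succ N ih => rw [renewalPartial_succ_eq_add]; infer_instance

lemma renewalPartial_succ (N : ℕ) :
    renewalPartial ρ (N + 1) = Measure.dirac 0 + renewalPartial ρ N ∗ ρ := by
  induction N with
  | zero => simp [renewalPartial, convPow]
  | succ N ih =>
    calc renewalPartial ρ (N + 2) = renewalPartial ρ (N + 1) + convPow ρ (N + 1) :=
          renewalPartial_succ_eq_add _
      _ = Measure.dirac 0 + (renewalPartial ρ N + convPow ρ N) ∗ ρ := by
          rw [ih, convPow_succ, add_assoc, Measure.add_conv]
      _ = Measure.dirac 0 + renewalPartial ρ (N + 1) ∗ ρ := by rw [renewalPartial_succ_eq_add]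

lemma renewalPartial_Iio_zero (hρ : ρ (Iio 0) = 0) (N : ℕ) : renewalPartial ρ N (Iio 0) = 0 := by
  simp [renewalPartial_apply, convPow_Iio_zero hρ]

lemma renewalPartial_Ico_le (hρ : ρ (Iio 0) = 0) (N : ℕ) (s : ℝ) :
    renewalPartial ρ N (Ico s (s + 1)) ≤ renewalPartial ρ N (Ico 0 1) := by
  induction N generalizing s with
  | zero => simp [renewalPartial]
  | succ N ih =>
    rcases le_or_gt s 0 with hs | hs
    · exact measure_Ico_le_Ico_zero_one (renewalPartial_Iio_zero hρ _) hs
    have hdirac : Measure.dirac (0 : ℝ) (Ico s (s + 1)) = 0 := by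
      rw [Measure.dirac_apply' _ measurableSet_Ico, indicator_of_notMem (by simp [hs.not_ge])]
    have hshift : ∀ y, (· + y) ⁻¹' Ico s (s + 1) = Ico (s - y) (s - y + 1) := fun y => by
      rw [preimage_add_const_Ico, sub_add_eq_add_sub]
    calc renewalPartial ρ (N + 1) (Ico s (s + 1)) = (renewalPartial ρ N ∗ ρ) (Ico s (s + 1)) := by
          rw [renewalPartial_succ, Measure.add_apply, hdirac, zero_add]
      _ ≤ renewalPartial ρ N (Ico 0 1) * ρ univ :=
          conv_le_of_forall_preimage_add_le measurableSet_Ico fun y => hshift y ▸ ih (s - y)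
      _ ≤ renewalPartial ρ (N + 1) (Ico 0 1) := by
          rw [measure_univ, mul_one, renewalPartial_succ_eq_add, Measure.add_apply]
          exact le_self_add

lemma tsum_convPow_Ico_le (hρ : ρ (Iio 0) = 0) (t : ℝ) :
    ∑' n, convPow ρ n (Ico t (t + 1)) ≤ ∑' n, convPow ρ n (Ico 0 1) := by
  simp only [ENNReal.tsum_eq_iSup_nat, ← renewalPartial_apply]
  exact iSup_mono fun N => renewalPartial_Ico_le hρ N t

lemma nuLimit_Ico_le (hρ : ρ (Iio 0) = 0) (t : ℝ) :
    nuLimit ρ (Ico t (t + 1)) ≤ ∑' n, convPow ρ n (Ico 0 1) := by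
  rw [nuLimit, Measure.sum_apply _ measurableSet_Ico]
  exact (ENNReal.tsum_comp_le_tsum_of_injective (add_left_injective 1) _).trans
    (tsum_convPow_Ico_le hρ t)

end Renewal

theorem renewal_measure_convergence
    (ρ : Measure ℝ) [IsProbabilityMeasure ρ]
    (hsupp : ρ (Set.Iio 0) = 0) (hzero : ρ {0} < 1) :
    ∃ ν : Measure ℝ,
      (∀ f : ℝ → ℝ, Continuous f → HasCompactSupport f →
        Tendsto (fun n => ∫ x, f x ∂(nuPartial ρ n)) atTop (𝓝 (∫ x, f x ∂ν))) ∧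
      (∀ K : Set ℝ, IsCompact K → ∃ C : ℝ≥0, ∀ t : ℝ, ν ((fun x => t + x) '' K) ≤ C) ∧
      (∃ C₁ C₂ : ℝ≥0, ∀ b x : ℝ, 0 ≤ b → 0 < x →
        ν (Set.Ico b (b + x)) ≤ 1 + C₁ + C₂ * ENNReal.ofReal x) := by
  set B := ∑' n, convPow ρ n (Ico 0 1)
  have hB : B ≠ ∞ := tsum_convPow_Ico_zero_one_ne_top hsupp hzero
  have hunit : ∀ t, nuLimit ρ (Ico t (t + 1)) ≤ B := nuLimit_Ico_le hsupp
  have : IsFiniteMeasureOnCompacts (nuLimit ρ) :=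
    isFiniteMeasureOnCompacts_of_forall_Ico_le hunit hB
  refine ⟨nuLimit ρ, fun f hf hfc => ?_, fun K hK => ?_,
    ⟨B.toNNReal, B.toNNReal, fun b x _ hx => ?_⟩⟩
  · have hfint : Integrable f (nuLimit ρ) := hf.integrable_of_hasCompactSupport hfc
    exact tendsto_integral_sum_range_measure hfint
  · obtain ⟨m, hm⟩ := exists_forall_measure_image_add_le hunit hK.isBounded
    refine ⟨(m * B).toNNReal, fun t => ?_⟩
    rw [ENNReal.coe_toNNReal (ENNReal.mul_ne_top (ENNReal.natCast_ne_top m) hB)]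
    exact hm t
  · rw [ENNReal.coe_toNNReal hB, add_assoc]
    exact (measure_Ico_le_add_mul hunit b hx.le).trans le_add_self
end

section
/- Let X₁, X₂, ... be i.i.d. nonnegative real random variables with common distribution ρ satisfying ρ({0}) < 1. Then for every b ≥ 0 and x > 0, the expected number of partial sums S_n = X₁ + ... + X_n (n ≥ 1) falling in [b, b+x) satisfies ∑_{n=1}^∞ P(b ≤ S_n < b+x) ≤ 1 + ∑_{m=1}^∞ P(S_m < x). -/
open MeasureTheory ProbabilityTheory
open scoped ENNReal

/-!
Write `Sₙ = X₀ + ⋯ + Xₙ` and split the sample space according to the first index `k` with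
`Sₖ ∈ [b, b + x)` (the sets `disjointed`). On that event, a later visit `S_{k+1+m} ∈ [b, b + x)`
forces the increment `S_{k+1+m} - Sₖ < x`. The increment depends only on `X_{k+1}, X_{k+2}, …`,
so it is independent of the first-visit event, which depends only on `X₀, …, Xₖ`, and it has the
law of `Sₘ`. Hence the expected number of visits on the `k`-th first-visit event is at most its
probability times `1 + ∑ₘ P(Sₘ < x)`, and the first-visit events are disjoint.
-/

namespace MeasureTheory

theorem tsum_measure_le_mul_of_disjointed {Ω : Type*} [MeasurableSpace Ω] {μ : Measure Ω}
    {E : ℕ → Set Ω} (hE : ∀ n, MeasurableSet (E n)) {p : ℕ → ℝ≥0∞}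
    (hp : ∀ k i, μ (disjointed E k ∩ E (k + 1 + i)) ≤ μ (disjointed E k) * p i) :
    ∑' n, μ (E n) ≤ μ (⋃ n, E n) * (1 + ∑' i, p i) := by
  have hblock (k : ℕ) :
      ∑' n, μ (disjointed E k ∩ E n) ≤ μ (disjointed E k) * (1 + ∑' i, p i) := by
    have hbefore : ∀ n < k, μ (disjointed E k ∩ E n) = 0 := fun n hn => by
      have hdisj : Disjoint (disjointed E k) (E n) := by
        rw [disjointed_eq_inter_compl]
        exact Set.disjoint_left.2 fun ω hω => by simp_all
      rw [hdisj.inter_eq, measure_empty]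
    calc ∑' n, μ (disjointed E k ∩ E n)
        = ∑ n ∈ Finset.range (k + 1), μ (disjointed E k ∩ E n)
          + ∑' i, μ (disjointed E k ∩ E (i + (k + 1))) :=
          ENNReal.summable.sum_add_tsum_nat_add'.symm
      _ ≤ μ (disjointed E k) + ∑' i, μ (disjointed E k) * p i := by
          rw [Finset.sum_range_succ,
            Finset.sum_eq_zero fun n hn => hbefore n (Finset.mem_range.1 hn), zero_add]
          gcongr with i
          · exact Set.inter_subset_left
          · rw [add_comm]; exact hp k i
      _ = μ (disjointed E k) * (1 + ∑' i, p i) := by rw [ENNReal.tsum_mul_left, mul_add, mul_one]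
  calc ∑' n, μ (E n) ≤ ∑' n, ∑' k, μ (disjointed E k ∩ E n) := by
        gcongr with n
        conv_lhs => rw [← Set.inter_eq_right.2 (Set.subset_iUnion E n), ← iUnion_disjointed,
          Set.iUnion_inter]
        exact measure_iUnion_le _
    _ = ∑' k, ∑' n, μ (disjointed E k ∩ E n) := ENNReal.tsum_comm
    _ ≤ ∑' k, μ (disjointed E k) * (1 + ∑' i, p i) := ENNReal.tsum_le_tsum hblock
    _ = μ (⋃ n, E n) * (1 + ∑' i, p i) := by
        rw [ENNReal.tsum_mul_right, ← measure_iUnion (disjoint_disjointed E)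
          (MeasurableSet.disjointed hE), iUnion_disjointed]

end MeasureTheory

namespace ProbabilityTheory

section Indep

variable {Ω ι β : Type*} [MeasurableSpace β] {X : ι → Ω → β}

theorem measurable_iSup_comap {T : Set ι} {i : ι} (hi : i ∈ T) :
    Measurable[⨆ j ∈ T, MeasurableSpace.comap (X j) ‹_›] (X i) := by
  have hle : MeasurableSpace.comap (X i) ‹_› ≤ ⨆ j ∈ T, MeasurableSpace.comap (X j) ‹_› :=
    le_iSup₂ (f := fun j (_ : j ∈ T) => MeasurableSpace.comap (X j) ‹_›) i hi
  exact (comap_measurable (X i)).mono hle le_rfl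

variable [MeasurableSpace Ω] {μ : Measure Ω}

theorem iIndepFun.measure_inter_eq_mul_of_Iic_of_Ioi [Preorder ι] (hmeas : ∀ i, Measurable (X i))
    (hindep : iIndepFun X μ) {k : ι} {A B : Set Ω}
    (hA : MeasurableSet[⨆ i ∈ Set.Iic k, MeasurableSpace.comap (X i) ‹_›] A)
    (hB : MeasurableSet[⨆ i ∈ Set.Ioi k, MeasurableSpace.comap (X i) ‹_›] B) :
    μ (A ∩ B) = μ A * μ B :=
  (Indep_iff _ _ μ).1 (indep_iSup_of_disjoint (fun i => (hmeas i).comap_le) hindep.iIndep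
    (Set.Iic_disjoint_Ioi le_rfl)) A B hA hB

end Indep

variable {Ω : Type*} [MeasurableSpace Ω] {μ : Measure Ω}

theorem iIndepFun.identDistrib_sum_range_shift {E : Type*} [MeasurableSpace E] [AddCommMonoid E]
    [MeasurableAdd₂ E] {X : ℕ → Ω → E} (hindep : iIndepFun X μ)
    (hident : ∀ i, IdentDistrib (X i) (X 0) μ μ) (j m : ℕ) :
    IdentDistrib (fun ω => ∑ i ∈ Finset.range m, X (j + i) ω)
      (fun ω => ∑ i ∈ Finset.range m, X i ω) μ μ := by
  have hshift : IdentDistrib (fun ω i => X (j + i) ω) (fun ω i => X i ω) μ μ :=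
    IdentDistrib.pi (fun i => (hident (j + i)).trans (hident i).symm)
      (hindep.precomp (add_right_injective j)) hindep
  exact hshift.comp (u := fun v : ℕ → E => ∑ i ∈ Finset.range m, v i)
    (Finset.measurable_sum _ fun i _ => measurable_pi_apply i)

theorem iIndepFun.measure_disjointed_inter_le {X : ℕ → Ω → ℝ} (hmeas : ∀ i, Measurable (X i))
    (hindep : iIndepFun X μ) (hident : ∀ i, IdentDistrib (X i) (X 0) μ μ) {b x : ℝ}
    {A : ℕ → Set Ω} (hA : ∀ n, A n = {ω | ∑ i ∈ Finset.range (n + 1), X i ω ∈ Set.Ico b (b + x)})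
    (k m : ℕ) :
    μ (disjointed A k ∩ A (k + 1 + m))
      ≤ μ (disjointed A k) * μ {ω | ∑ i ∈ Finset.range (m + 1), X i ω < x} := by
  set T : Ω → ℝ := fun ω => ∑ i ∈ Finset.range (m + 1), X (k + 1 + i) ω
  have hsub : disjointed A k ∩ A (k + 1 + m) ⊆ disjointed A k ∩ T ⁻¹' Set.Iio x := by
    rintro ω ⟨hfirst, hlater⟩
    have hk := disjointed_subset A k hfirst
    have hsplit : ∑ i ∈ Finset.range (k + 1 + m + 1), X i ω
        = ∑ i ∈ Finset.range (k + 1), X i ω + T ω :=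
      Finset.sum_range_add (fun i => X i ω) (k + 1) (m + 1)
    rw [hA] at hk hlater
    simp only [Set.mem_ofPred_eq, Set.mem_Ico] at hk hlater
    exact ⟨hfirst, show T ω < x by linarith⟩
  have hpast : MeasurableSet[⨆ i ∈ Set.Iic k, MeasurableSpace.comap (X i) inferInstance]
      (disjointed A k) := by
    have hA_meas (j : ℕ) (hj : j ≤ k) :
        MeasurableSet[⨆ i ∈ Set.Iic k, MeasurableSpace.comap (X i) inferInstance] (A j) := by
      rw [hA]
      refine (Finset.measurable_sum _ fun i hi => measurable_iSup_comap ?_) measurableSet_Ico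
      exact (Finset.mem_range_succ_iff.1 hi).trans hj
    rw [disjointed_eq_inter_compl]
    exact (hA_meas k le_rfl).inter
      (.iInter fun j => .iInter fun (hj : j < k) => (hA_meas j hj.le).compl)
  have hfuture : MeasurableSet[⨆ i ∈ Set.Ioi k, MeasurableSpace.comap (X i) inferInstance]
      (T ⁻¹' Set.Iio x) :=
    (Finset.measurable_sum _ fun i _ => measurable_iSup_comap (Set.mem_Ioi.2 (by omega)))
      measurableSet_Iio
  calc μ (disjointed A k ∩ A (k + 1 + m)) ≤ μ (disjointed A k ∩ T ⁻¹' Set.Iio x) :=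
        measure_mono hsub
    _ = μ (disjointed A k) * μ (T ⁻¹' Set.Iio x) :=
        hindep.measure_inter_eq_mul_of_Iic_of_Ioi hmeas hpast hfuture
    _ = μ (disjointed A k) * μ {ω | ∑ i ∈ Finset.range (m + 1), X i ω < x} := by
        rw [(hindep.identDistrib_sum_range_shift hident (k + 1) (m + 1)).measure_mem_eq
          measurableSet_Iio]
        rfl

end ProbabilityTheory

theorem renewal_interval_bound_general
    {Ω : Type*} [MeasureSpace Ω] [IsProbabilityMeasure (ℙ : Measure Ω)]
    (X : ℕ → Ω → ℝ)
    (hmeas : ∀ i, Measurable (X i))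
    (hindep : iIndepFun X ℙ)
    (hident : ∀ i, Measure.map (X i) ℙ = Measure.map (X 0) ℙ) :
    ∀ b x : ℝ, 0 ≤ b → 0 < x →
      (∑' n : ℕ, ℙ {ω | (∑ i ∈ Finset.range (n + 1), X i ω) ∈ Set.Ico b (b + x)})
        ≤ 1 + ∑' m : ℕ, ℙ {ω | (∑ i ∈ Finset.range (m + 1), X i ω) < x} := by
  intro b x _ _
  have hident' (i : ℕ) : IdentDistrib (X i) (X 0) ℙ ℙ :=
    ⟨(hmeas i).aemeasurable, (hmeas 0).aemeasurable, hident i⟩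
  have hvisit_meas (n : ℕ) :
      MeasurableSet {ω | (∑ i ∈ Finset.range (n + 1), X i ω) ∈ Set.Ico b (b + x)} :=
    Finset.measurable_sum _ (fun i _ => hmeas i) measurableSet_Ico
  calc _ ≤ ℙ (⋃ n, {ω | (∑ i ∈ Finset.range (n + 1), X i ω) ∈ Set.Ico b (b + x)})
          * (1 + ∑' m : ℕ, ℙ {ω | (∑ i ∈ Finset.range (m + 1), X i ω) < x}) :=
        tsum_measure_le_mul_of_disjointed hvisit_meas
          (hindep.measure_disjointed_inter_le hmeas hident' fun _ => rfl)
    _ ≤ 1 + ∑' m : ℕ, ℙ {ω | (∑ i ∈ Finset.range (m + 1), X i ω) < x} :=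
        mul_le_of_le_one_left' prob_le_one

theorem renewal_interval_bound
    {Ω : Type*} [MeasureSpace Ω] [IsProbabilityMeasure (ℙ : Measure Ω)]
    (X : ℕ → Ω → ℝ)
    (hmeas : ∀ i, Measurable (X i))
    (hnonneg : ∀ i ω, 0 ≤ X i ω)
    (hindep : iIndepFun X ℙ)
    (hident : ∀ i, Measure.map (X i) ℙ = Measure.map (X 0) ℙ)
    (hzero : ℙ {ω | X 0 ω = 0} < 1) :
    ∀ b x : ℝ, 0 ≤ b → 0 < x →
      (∑' n : ℕ, ℙ {ω | (∑ i ∈ Finset.range (n + 1), X i ω) ∈ Set.Ico b (b + x)})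
        ≤ 1 + ∑' m : ℕ, ℙ {ω | (∑ i ∈ Finset.range (m + 1), X i ω) < x} :=
  renewal_interval_bound_general X hmeas hindep hident
end

section
/- Let X₁, X₂, ... be i.i.d. nonnegative random variables and suppose there exist a > 0 and p ∈ (0,1) with P(X₁ < a) = p. Then ∑_{m=1}^∞ P(X₁ + ... + X_m < x) ≤ p/(1-p) + x/(a(1-p)) for all x > 0. -/
/-!
If `X₀ + ⋯ + X_m < x`, fewer than `N = ⌈x / a⌉` of the `X_i` with `i ≤ m` are `≥ a`, so the
`m`-th term is at most the probability of fewer than `N` successes in `m + 1` independent trials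
with success probability `q = 1 - p`. Summed over all numbers of trials `M ≥ 0`, the probability
of exactly `j` successes has mass `∑_M C(M, j) q^j p^(M-j) = 1 / q` (the expected time spent at
`j` successes), so `1 + ∑_m P(S_{m+1} < x) ≤ N / q ≤ (1 + x / a) / q`.
-/

open MeasureTheory ProbabilityTheory Finset
open scoped ENNReal

lemma card_filter_le_lt_ceil_div {ι : Type*} (s : Finset ι) {f : ι → ℝ} (hf : ∀ i ∈ s, 0 ≤ f i)
    {a x : ℝ} (ha : 0 < a) (hsum : ∑ i ∈ s, f i < x) :
    #{i ∈ s | a ≤ f i} < ⌈x / a⌉₊ := by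
  have hle : #{i ∈ s | a ≤ f i} * a ≤ ∑ i ∈ s, f i := by
    calc (#{i ∈ s | a ≤ f i} : ℝ) * a = #{i ∈ s | a ≤ f i} • a := (nsmul_eq_mul _ _).symm
      _ ≤ ∑ i ∈ s with a ≤ f i, f i := card_nsmul_le_sum _ _ _ fun i hi => (mem_filter.1 hi).2
      _ ≤ ∑ i ∈ s, f i := sum_le_sum_of_subset_of_nonneg (filter_subset _ _) fun i hi _ => hf i hi
  exact_mod_cast ((lt_div_iff₀ ha).2 (hle.trans_lt hsum)).trans_le (Nat.le_ceil _)

/-- The probability of fewer than `N` successes in `M` independent trials, each succeeding with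
probability `q` and failing with probability `r`. -/
noncomputable def binomialLowerTail (q r : ℝ≥0∞) (M N : ℕ) : ℝ≥0∞ :=
  ∑ j ∈ range N, (M.choose j : ℝ≥0∞) * (q ^ j * r ^ (M - j))

lemma binomialLowerTail_zero_of_pos (q r : ℝ≥0∞) {N : ℕ} (hN : 0 < N) :
    binomialLowerTail q r 0 N = 1 := by
  rw [binomialLowerTail, sum_eq_single_of_mem 0 (mem_range.2 hN) fun j _ hj => by
    rw [Nat.choose_eq_zero_of_lt (Nat.pos_of_ne_zero hj), Nat.cast_zero, zero_mul]]
  simp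

lemma tsum_choose_mul_ofReal_pow_mul_pow_sub {p : ℝ} (hp0 : 0 ≤ p) (hp1 : p < 1) (j : ℕ) :
    ∑' M : ℕ, (M.choose j : ℝ≥0∞) * (ENNReal.ofReal (1 - p) ^ j * ENNReal.ofReal p ^ (M - j))
      = ENNReal.ofReal (1 - p)⁻¹ := by
  have hq : 0 < 1 - p := sub_pos.2 hp1
  have hshifted : HasSum (fun n : ℕ => ((n + j).choose j : ℝ) * ((1 - p) ^ j * p ^ n))
      (1 - p)⁻¹ := by
    have h := (hasSum_choose_mul_geometric_of_norm_lt_one j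
      (by rwa [Real.norm_of_nonneg hp0])).mul_left ((1 - p) ^ j)
    rw [pow_succ, mul_one_div, div_mul_cancel_left₀ (pow_ne_zero j hq.ne')] at h
    exact h.congr_fun fun n => by ring
  have hsum : HasSum (fun M : ℕ => (M.choose j : ℝ) * ((1 - p) ^ j * p ^ (M - j))) (1 - p)⁻¹ := by
    rw [← hasSum_nat_add_iff' j, sum_eq_zero fun i hi => by
      rw [Nat.choose_eq_zero_of_lt (mem_range.1 hi), Nat.cast_zero, zero_mul], sub_zero]
    simpa only [Nat.add_sub_cancel] using hshifted
  rw [← hsum.tsum_eq, ENNReal.ofReal_tsum_of_nonneg (fun M => by positivity) hsum.summable]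
  refine tsum_congr fun M => ?_
  rw [ENNReal.ofReal_mul (by positivity), ENNReal.ofReal_mul (by positivity),
    ENNReal.ofReal_pow hq.le, ENNReal.ofReal_pow hp0, ENNReal.ofReal_natCast]

lemma tsum_binomialLowerTail {p : ℝ} (hp0 : 0 ≤ p) (hp1 : p < 1) (N : ℕ) :
    ∑' M, binomialLowerTail (ENNReal.ofReal (1 - p)) (ENNReal.ofReal p) M N
      = N * ENNReal.ofReal (1 - p)⁻¹ := by
  simp only [binomialLowerTail]
  rw [Summable.tsum_finsetSum fun _ _ => ENNReal.summable]
  simp only [tsum_choose_mul_ofReal_pow_mul_pow_sub hp0 hp1, sum_const, card_range, nsmul_eq_mul]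

section IndependentTrials

variable {Ω β : Type*} {mΩ : MeasurableSpace Ω} {mβ : MeasurableSpace β} {μ : Measure Ω}
  {X : ℕ → Ω → β} {B : Set β} {r r' : ℝ≥0∞}

open Classical in
lemma ProbabilityTheory.iIndepFun.measure_filter_mem_eq (hX : iIndepFun X μ)
    (hB : MeasurableSet B) (hr : ∀ i, μ (X i ⁻¹' B) = r) (hr' : ∀ i, μ (X i ⁻¹' Bᶜ) = r')
    {M : ℕ} {s : Finset ℕ} (hs : s ⊆ range M) :
    μ {ω | {i ∈ range M | X i ω ∈ B} = s} = r ^ #s * r' ^ (M - #s) := by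
  have hset : {ω | {i ∈ range M | X i ω ∈ B} = s}
      = ⋂ i ∈ range M, X i ⁻¹' (if i ∈ s then B else Bᶜ) := by
    ext ω
    simp only [Set.mem_ofPred_eq, Set.mem_iInter, Finset.ext_iff, mem_filter, mem_range]
    constructor
    · intro h i hi
      split_ifs with his
      · exact ((h i).2 his).2
      · exact fun hB => his ((h i).1 ⟨hi, hB⟩)
    · intro h i
      by_cases his : i ∈ s
      · simpa [his, mem_range.1 (hs his)] using h i (mem_range.1 (hs his))
      · simpa [his] using fun hi => h i hi
  have hmeas : ∀ i ∈ range M,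
      MeasurableSet[mβ.comap (X i)] (X i ⁻¹' (if i ∈ s then B else Bᶜ)) := fun i _ =>
    ⟨_, by split_ifs; exacts [hB, hB.compl], rfl⟩
  have hfactor : ∀ i ∈ range M,
      μ (X i ⁻¹' (if i ∈ s then B else Bᶜ)) = if i ∈ s then r else r' := fun i _ => by
    split_ifs <;> simp only [hr, hr']
  rw [hset, hX.meas_biInter hmeas, prod_congr rfl hfactor, prod_ite, prod_const, prod_const,
    filter_mem_eq_inter, inter_eq_right.2 hs, filter_notMem_eq_sdiff, card_sdiff_of_subset hs,
    card_range]

open Classical in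
lemma ProbabilityTheory.iIndepFun.measure_card_filter_mem_lt_le (hX : iIndepFun X μ)
    (hB : MeasurableSet B) (hr : ∀ i, μ (X i ⁻¹' B) = r) (hr' : ∀ i, μ (X i ⁻¹' Bᶜ) = r')
    (M N : ℕ) :
    μ {ω | #{i ∈ range M | X i ω ∈ B} < N} ≤ binomialLowerTail r r' M N := by
  have hcover : {ω | #{i ∈ range M | X i ω ∈ B} < N}
      ⊆ ⋃ j ∈ range N, ⋃ s ∈ powersetCard j (range M), {ω | {i ∈ range M | X i ω ∈ B} = s} :=
    fun ω hω => by
      simp only [Set.mem_iUnion, mem_range, mem_powersetCard]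
      exact ⟨_, hω, _, ⟨filter_subset _ _, rfl⟩, rfl⟩
  calc μ {ω | #{i ∈ range M | X i ω ∈ B} < N}
      ≤ ∑ j ∈ range N, ∑ s ∈ powersetCard j (range M),
          μ {ω | {i ∈ range M | X i ω ∈ B} = s} :=
        (measure_mono hcover).trans <| (measure_biUnion_finset_le _ _).trans <|
          sum_le_sum fun j _ => measure_biUnion_finset_le _ _
    _ = binomialLowerTail r r' M N := by
      refine sum_congr rfl fun j _ => ?_
      rw [sum_congr rfl fun s hs => by
          rw [hX.measure_filter_mem_eq hB hr hr' (mem_powersetCard.1 hs).1,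
            (mem_powersetCard.1 hs).2],
        sum_const, card_powersetCard, card_range, nsmul_eq_mul]

end IndependentTrials

lemma natCast_ceil_div_mul_ofReal_inv_le {a p x : ℝ} (ha : 0 < a) (hp0 : 0 ≤ p) (hp1 : p < 1)
    (hx : 0 < x) :
    ⌈x / a⌉₊ * ENNReal.ofReal (1 - p)⁻¹
      ≤ 1 + (ENNReal.ofReal (p / (1 - p)) + ENNReal.ofReal (x / (a * (1 - p)))) := by
  have hq : 0 < 1 - p := sub_pos.2 hp1
  have hceil : (⌈x / a⌉₊ : ℝ) * (1 - p)⁻¹ ≤ 1 + (p / (1 - p) + x / (a * (1 - p))) :=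
    calc (⌈x / a⌉₊ : ℝ) * (1 - p)⁻¹ ≤ (x / a + 1) * (1 - p)⁻¹ := by
          gcongr; exact (Nat.ceil_lt_add_one (div_pos hx ha).le).le
      _ = 1 + (p / (1 - p) + x / (a * (1 - p))) := by field_simp; ring
  rw [← ENNReal.ofReal_natCast, ← ENNReal.ofReal_mul (Nat.cast_nonneg _), ← ENNReal.ofReal_one,
    ← ENNReal.ofReal_add (by positivity) (by positivity),
    ← ENNReal.ofReal_add zero_le_one (by positivity)]
  exact ENNReal.ofReal_le_ofReal hceil

theorem renewal_function_bound
    {Ω : Type*} [MeasureSpace Ω] [IsProbabilityMeasure (ℙ : Measure Ω)]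
    (X : ℕ → Ω → ℝ)
    (hmeas : ∀ i, Measurable (X i))
    (hnonneg : ∀ i ω, 0 ≤ X i ω)
    (hindep : iIndepFun X ℙ)
    (hident : ∀ i, Measure.map (X i) ℙ = Measure.map (X 0) ℙ)
    (a p : ℝ) (ha : 0 < a) (hp0 : 0 < p) (hp1 : p < 1)
    (hp : ℙ {ω | X 0 ω < a} = ENNReal.ofReal p) :
    ∀ x : ℝ, 0 < x →
      (∑' m : ℕ, ℙ {ω | (∑ i ∈ Finset.range (m + 1), X i ω) < x})
        ≤ ENNReal.ofReal (p / (1 - p)) + ENNReal.ofReal (x / (a * (1 - p))) := by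
  intro x hx
  set tail := fun M => binomialLowerTail (ENNReal.ofReal (1 - p)) (ENNReal.ofReal p) M ⌈x / a⌉₊
  have hfail : ∀ i, ℙ (X i ⁻¹' (Set.Ici a)ᶜ) = ENNReal.ofReal p := fun i => by
    rw [Set.compl_Ici, ← Measure.map_apply (hmeas i) measurableSet_Iio, hident i,
      Measure.map_apply (hmeas 0) measurableSet_Iio, ← hp]
    rfl
  have hsucc : ∀ i, ℙ (X i ⁻¹' Set.Ici a) = ENNReal.ofReal (1 - p) := fun i => by
    rw [← compl_compl (Set.Ici a), Set.preimage_compl,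
      prob_compl_eq_one_sub (hmeas i measurableSet_Ici.compl), hfail,
      ENNReal.ofReal_sub 1 hp0.le, ENNReal.ofReal_one]
  have hterm : ∀ m, ℙ {ω | ∑ i ∈ range (m + 1), X i ω < x} ≤ tail (m + 1) := fun m =>
    (measure_mono fun ω hω => card_filter_le_lt_ceil_div _ (fun i _ => hnonneg i ω) ha hω).trans
      (hindep.measure_card_filter_mem_lt_le measurableSet_Ici hsucc hfail _ _)
  rw [← ENNReal.add_le_add_iff_left ENNReal.one_ne_top]
  calc 1 + ∑' m, ℙ {ω | ∑ i ∈ range (m + 1), X i ω < x}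
      ≤ tail 0 + ∑' m, tail (m + 1) := by
        have htail0 : tail 0 = 1 :=
          binomialLowerTail_zero_of_pos _ _ (Nat.ceil_pos.2 (div_pos hx ha))
        rw [htail0]
        gcongr with m
        exact hterm m
    _ = ⌈x / a⌉₊ * ENNReal.ofReal (1 - p)⁻¹ :=
        (tsum_eq_zero_add' ENNReal.summable).symm.trans (tsum_binomialLowerTail hp0.le hp1 _)
    _ ≤ _ := natCast_ceil_div_mul_ofReal_inv_le ha hp0.le hp1 hx
end

section
/- Let M' be a family of uniformly translation bounded positive measures on ℝ^d and ν a finite positive measure. Then there exists a sequence of radii R_k ↗ ∞ such that for every compact K ⊂ ℝ^d, the series ∑_{k=1}^∞ sup_{ω∈M'} (ω restricted to the complement of the centred ball of radius R_k, convolved with ν)(K) is finite. -/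
open MeasureTheory Filter Topology
open scoped NNReal ENNReal

/-!
The finite measure `ν` has arbitrarily small mass outside large balls, so the radii can be chosen
with `ν (B(0, R k - k)ᶜ) ≤ 2⁻¹ ^ k`. If `K ⊆ B(0, ρ)`, the integrand `ω|_{B(0, R k)ᶜ}(K - y)`
vanishes for `‖y‖ < R k - ρ` and is at most the translation bound `C_K` otherwise, so the `k`-th
term is at most `C_K ν (B(0, R k - ρ)ᶜ) ≤ C_K 2⁻¹ ^ k` as soon as `k ≥ ρ`.
-/

open Metric Set

theorem ENNReal.tsum_ne_top_of_eventually_le {f g : ℕ → ℝ≥0∞} (hf : ∀ k, f k ≠ ∞)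
    (hfg : ∀ᶠ k in atTop, f k ≤ g k) (hg : ∑' k, g k ≠ ∞) : ∑' k, f k ≠ ∞ := by
  obtain ⟨n, hfg⟩ := eventually_atTop.1 hfg
  rw [← ENNReal.summable.sum_add_tsum_nat_add' (k := n)]
  refine ENNReal.add_ne_top.2 ⟨ENNReal.sum_ne_top.2 fun k _ => hf k, ne_top_of_le_ne_top hg ?_⟩
  calc ∑' k, f (k + n) ≤ ∑' k, g (k + n) :=
        ENNReal.tsum_le_tsum fun k => hfg _ (Nat.le_add_left n k)
    _ ≤ ∑' k, g k := ENNReal.tsum_comp_le_tsum_of_injective (add_left_injective n) g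

section Tail

variable {X : Type*} [PseudoMetricSpace X] [MeasurableSpace X] [OpensMeasurableSpace X]
  (ν : Measure X) [IsFiniteMeasure ν]

theorem tendsto_measure_compl_ball_atTop (x : X) :
    Tendsto (fun r : ℝ => ν (ball x r)ᶜ) atTop (𝓝 0) := by
  have hunion : ⋃ r : ℝ, ball x r = univ :=
    eq_univ_of_forall fun y => mem_iUnion.2 ⟨dist y x + 1, mem_ball.2 (lt_add_one _)⟩
  have h := tendsto_measure_iInter_atTop (μ := ν) (s := fun r : ℝ => (ball x r)ᶜ)
    (fun _ => measurableSet_ball.compl.nullMeasurableSet)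
    (fun _ _ hrs => compl_subset_compl.2 (ball_subset_ball hrs)) ⟨0, measure_ne_top ν _⟩
  rwa [← compl_iUnion, hunion, compl_univ, measure_empty] at h

theorem exists_strictMono_tendsto_measure_compl_ball_sub_le (x : X) {ε : ℕ → ℝ≥0∞}
    (hε : ∀ k, 0 < ε k) :
    ∃ R : ℕ → ℝ, StrictMono R ∧ Tendsto R atTop atTop ∧ ∀ k, ν (ball x (R k - k))ᶜ ≤ ε k := by
  have hev : ∀ k : ℕ, ∀ᶠ m : ℕ in atTop, ν (ball x ((m : ℝ) - k))ᶜ ≤ ε k := fun k =>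
    ((tendsto_measure_compl_ball_atTop ν x).comp
      (tendsto_atTop_add_const_right _ _ tendsto_natCast_atTop_atTop)).eventually
      (ge_mem_nhds (hε k))
  obtain ⟨φ, hφ, hφε⟩ := extraction_forall_of_eventually hev
  exact ⟨fun k => φ k, Nat.strictMono_cast.comp hφ,
    tendsto_natCast_atTop_atTop.comp hφ.tendsto_atTop, hφε⟩

end Tail

section Translate

variable {E : Type*} [NormedAddCommGroup E] {K : Set E} {ρ : ℝ}

theorem preimage_add_right_subset_ball (hK : K ⊆ ball 0 ρ) {R : ℝ} {y : E} (hy : ‖y‖ < R - ρ) :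
    (fun x => x + y) ⁻¹' K ⊆ ball 0 R := by
  intro x hx
  have hxy : ‖x + y‖ < ρ := mem_ball_zero_iff.1 (hK hx)
  rw [mem_ball_zero_iff]
  calc ‖x‖ = ‖(x + y) - y‖ := by rw [add_sub_cancel_right]
    _ ≤ ‖x + y‖ + ‖y‖ := norm_sub_le _ _
    _ < R := by linarith

variable [MeasurableSpace E] [OpensMeasurableSpace E]

theorem lintegral_restrict_compl_ball_preimage_add_le (ω ν : Measure E) (hK : K ⊆ ball 0 ρ)
    {C : ℝ≥0∞} (hC : ∀ t, ω ((fun x => t + x) '' K) ≤ C) (R : ℝ) :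
    ∫⁻ y, (ω.restrict (ball 0 R)ᶜ) ((fun x => x + y) ⁻¹' K) ∂ν ≤ C * ν (ball 0 (R - ρ))ᶜ := by
  calc ∫⁻ y, (ω.restrict (ball 0 R)ᶜ) ((fun x => x + y) ⁻¹' K) ∂ν
      ≤ ∫⁻ y, (ball (0 : E) (R - ρ))ᶜ.indicator (fun _ => C) y ∂ν := lintegral_mono fun y => ?_
    _ = C * ν (ball 0 (R - ρ))ᶜ := lintegral_indicator_const measurableSet_ball.compl C
  by_cases hy : y ∈ (ball (0 : E) (R - ρ))ᶜ
  · have htranslate : (fun x => x + y) ⁻¹' K = (fun x => -y + x) '' K := by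
      rw [image_add_left, neg_neg]
      simp only [add_comm]
    rw [indicator_of_mem hy, htranslate]
    exact Measure.restrict_le_self _ |>.trans (hC (-y))
  · have hy' : ‖y‖ < R - ρ := by simpa [lt_sub_iff_add_lt] using hy
    rw [indicator_of_notMem hy, Measure.restrict_apply' measurableSet_ball.compl,
      disjoint_iff_inter_eq_empty.1 (disjoint_compl_right_iff_subset.2
        (preimage_add_right_subset_ball hK hy')), measure_empty]

end Translate

theorem summable_tail_convolution_bound
    (d : ℕ) (M' : Set (Measure (EuclideanSpace ℝ (Fin d))))
    (hM' : ∀ K : Set (EuclideanSpace ℝ (Fin d)), IsCompact K → ∃ C : ℝ≥0,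
      ∀ ω ∈ M', ∀ t : EuclideanSpace ℝ (Fin d), ω ((fun x => t + x) '' K) ≤ C)
    (ν : Measure (EuclideanSpace ℝ (Fin d))) [IsFiniteMeasure ν] :
    ∃ R : ℕ → ℝ, StrictMono R ∧ Tendsto R atTop atTop ∧
      ∀ K : Set (EuclideanSpace ℝ (Fin d)), IsCompact K →
        (∑' k : ℕ, ⨆ ω ∈ M',
          ∫⁻ y, (ω.restrict (Metric.ball (0 : EuclideanSpace ℝ (Fin d)) (R k))ᶜ)
              ((fun x => x + y) ⁻¹' K) ∂ν) < ⊤ := by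
  obtain ⟨R, hR_mono, hR_tendsto, hR_tail⟩ :=
    exists_strictMono_tendsto_measure_compl_ball_sub_le ν 0
      (ε := fun k => 2⁻¹ ^ k) fun k => ENNReal.pow_pos (by norm_num) k
  refine ⟨R, hR_mono, hR_tendsto, fun K hK => lt_top_iff_ne_top.2 ?_⟩
  obtain ⟨C, hC⟩ := hM' K hK
  obtain ⟨r, hKr⟩ := hK.isBounded.subset_ball 0
  obtain ⟨ρ, hrρ⟩ := exists_nat_ge r
  have hKρ : K ⊆ ball 0 (ρ : ℝ) := hKr.trans (ball_subset_ball hrρ)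
  have hterm : ∀ k, ⨆ ω ∈ M', ∫⁻ y, (ω.restrict (ball 0 (R k))ᶜ) ((fun x => x + y) ⁻¹' K) ∂ν
      ≤ C * ν (ball 0 (R k - ρ))ᶜ := fun k =>
    iSup₂_le fun ω hω => lintegral_restrict_compl_ball_preimage_add_le ω ν hKρ (hC ω hω) _
  refine ENNReal.tsum_ne_top_of_eventually_le (g := fun k => C * 2⁻¹ ^ k)
    (fun k => ne_top_of_le_ne_top (ENNReal.mul_ne_top ENNReal.coe_ne_top (measure_ne_top _ _))
      (hterm k)) (eventually_atTop.2 ⟨ρ, fun k hk => (hterm k).trans ?_⟩) ?_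
  · have hρk : (ρ : ℝ) ≤ k := by exact_mod_cast hk
    gcongr
    exact (measure_mono (compl_subset_compl.2 (ball_subset_ball (by linarith)))).trans (hR_tail k)
  · rw [ENNReal.tsum_mul_left, ENNReal.tsum_geometric, ENNReal.one_sub_inv_two, inv_inv]
    exact ENNReal.mul_ne_top ENNReal.coe_ne_top ENNReal.ofNat_ne_top
end
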